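/- arXiv:2602.21030 — 4 statements merged into one kernel-verified Lean document; each statement's English description precedes it below -/
import Mathlib

section
/- The n×n matrix A with entries a_{ij} = 1/(i+j) (indices from 1 to n) is positive definite. -/
open Polynomial Matrix intervalIntegral

theorem cauchy_matrix_posDef (n : ℕ) :
    (Matrix.of fun i j : Fin n => (1 : ℝ) / ((i : ℝ) + 1 + ((j : ℝ) + 1))).PosDef := by
  refine Matrix.PosDef.of_dotProduct_mulVec_pos ?_ ?_
  · ext i j
    simp [Matrix.conjTranspose, Matrix.of_apply]
    ring_nf
  · intro x hx
    -- the polynomial p(t) = ∑ i, x i * t^i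
    set P : ℝ[X] := ∑ i : Fin n, C (x i) * X ^ (i : ℕ) with hP
    have hPne : P ≠ 0 := by
      intro h0
      apply hx
      funext i
      have : P.coeff (i : ℕ) = x i := by
        rw [hP, Polynomial.finset_sum_coeff]
        rw [Finset.sum_eq_single i]
        · simp
        · intro j _ hji
          rw [Polynomial.coeff_C_mul, Polynomial.coeff_X_pow]
          rw [if_neg (fun h => hji (Fin.ext h.symm)), mul_zero]
        · simp
      rw [h0] at this
      simpa using this.symm
    -- quadratic form equals the integral of t * p(t)^2 over [0,1]
    have key : dotProduct (star x) ((Matrix.of fun i j : Fin n =>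
        (1 : ℝ) / ((i : ℝ) + 1 + ((j : ℝ) + 1))) *ᵥ x)
        = ∫ t in (0:ℝ)..1, t * (P.eval t) ^ 2 := by
      have hcalc : ∀ t : ℝ, t * (P.eval t) ^ 2
          = ∑ i : Fin n, ∑ j : Fin n, x i * x j * t ^ ((i : ℕ) + (j : ℕ) + 1) := by
        intro t
        rw [hP]
        simp only [Polynomial.eval_finset_sum, Polynomial.eval_mul, Polynomial.eval_C,
          Polynomial.eval_pow, Polynomial.eval_X]
        rw [sq, Finset.sum_mul_sum, Finset.mul_sum]
        refine Finset.sum_congr rfl fun i _ => ?_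
        rw [Finset.mul_sum]
        refine Finset.sum_congr rfl fun j _ => ?_
        ring
      rw [intervalIntegral.integral_congr (g := fun t =>
        ∑ i : Fin n, ∑ j : Fin n, x i * x j * t ^ ((i : ℕ) + (j : ℕ) + 1))
        (fun t _ => hcalc t)]
      rw [intervalIntegral.integral_finset_sum (f := fun i t =>
        ∑ j : Fin n, x i * x j * t ^ ((i : ℕ) + (j : ℕ) + 1)) (fun i _ =>
        ((continuous_finset_sum _ fun j _ =>
          continuous_const.mul (continuous_pow _)).intervalIntegrable 0 1))]
      simp_rw [intervalIntegral.integral_finset_sum (fun j _ =>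
        (continuous_const.fun_mul (continuous_pow _)).intervalIntegrable 0 1),
        intervalIntegral.integral_const_mul, integral_pow]
      rw [dotProduct, Finset.sum_congr rfl]
      intro i _
      rw [Matrix.mulVec, dotProduct]
      simp only [Matrix.of_apply, Pi.star_apply, star_trivial]
      rw [Finset.mul_sum, Finset.sum_congr rfl]
      intro j _
      rw [zero_pow (by omega), one_pow, sub_zero]
      have h2 : (0:ℝ) < (i : ℝ) + 1 + ((j : ℝ) + 1) := by positivity
      push_cast
      field_simp
      ring_nf
    rw [key]
    apply intervalIntegral.integral_pos one_pos
    · exact (continuous_id.mul ((P.continuous).pow 2)).continuousOn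
    · intro t ht
      exact mul_nonneg ht.1.le (sq_nonneg _)
    · by_contra hcon
      push_neg at hcon
      apply hPne
      apply Polynomial.eq_zero_of_infinite_isRoot
      apply Set.Infinite.mono (s := Set.Ioc (0:ℝ) 1)
      · intro t ht
        have h1 := hcon t ⟨ht.1.le, ht.2⟩
        have h2 : 0 ≤ t * (P.eval t)^2 := mul_nonneg ht.1.le (sq_nonneg _)
        have h3 : t * (P.eval t)^2 = 0 := le_antisymm h1 h2
        rcases mul_eq_zero.mp h3 with h | h
        · exact absurd h ht.1.ne'
        · exact pow_eq_zero_iff (by norm_num) |>.mp h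
      · exact Set.Ioc_infinite one_pos
end

section
/- The 5×5 Horn matrix H, with diagonal entries 1 and off-diagonal entries H_{ij} = -1 if |i-j| ∈ {1,4} and H_{ij} = 1 otherwise, is copositive. -/
open scoped Matrix

def Copositive {n : ℕ} (A : Matrix (Fin n) (Fin n) ℝ) : Prop :=
  ∀ x : Fin n → ℝ, (∀ i, 0 ≤ x i) → 0 ≤ x ⬝ᵥ A.mulVec x

def HornMatrix : Matrix (Fin 5) (Fin 5) ℝ :=
  !![1, -1, 1, 1, -1;
     -1, 1, -1, 1, 1;
     1, -1, 1, -1, 1;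
     1, 1, -1, 1, -1;
     -1, 1, 1, -1, 1]

/-!
The quadratic form of the Horn matrix is a square plus two multiples of products of coordinates
in two ways. On the nonnegative orthant every term of the first decomposition is nonnegative
when `x 3 ≤ x 4`, and every term of the second when `x 4 ≤ x 3`.
-/

lemma hornMatrix_quadForm_eq (x : Fin 5 → ℝ) :
    x ⬝ᵥ HornMatrix.mulVec x =
      (x 0 - x 1 + x 2 + x 3 - x 4) ^ 2 + 4 * (x 1 * x 3) + 4 * (x 2 * (x 4 - x 3)) := by
  simp only [dotProduct, Matrix.mulVec, HornMatrix, Fin.sum_univ_five, Matrix.of_apply,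
    Matrix.cons_val, Matrix.cons_val_zero, Matrix.cons_val_one]
  ring

lemma hornMatrix_quadForm_eq' (x : Fin 5 → ℝ) :
    x ⬝ᵥ HornMatrix.mulVec x =
      (x 0 - x 1 + x 2 - x 3 + x 4) ^ 2 + 4 * (x 1 * x 4) + 4 * (x 0 * (x 3 - x 4)) :=
  (hornMatrix_quadForm_eq x).trans (by ring)

theorem hornMatrix_copositive : Copositive HornMatrix := by
  intro x hx
  rcases le_total (x 3) (x 4) with h | h
  · rw [hornMatrix_quadForm_eq]
    exact add_nonneg (add_nonneg (sq_nonneg _) (mul_nonneg zero_le_four (mul_nonneg (hx 1) (hx 3))))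
      (mul_nonneg zero_le_four (mul_nonneg (hx 2) (sub_nonneg.2 h)))
  · rw [hornMatrix_quadForm_eq']
    exact add_nonneg (add_nonneg (sq_nonneg _) (mul_nonneg zero_le_four (mul_nonneg (hx 1) (hx 4))))
      (mul_nonneg zero_le_four (mul_nonneg (hx 0) (sub_nonneg.2 h)))
end

section
/- If A ∈ ℝ^{m×n} is semipositive, X ∈ ℝ^{m×m} is row positive (entrywise nonnegative with at least one positive entry in each row), and Y ∈ ℝ^{n×n} is inverse nonnegative (invertible with entrywise nonnegative inverse), then XAY is semipositive. -/
open scoped Matrix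

/-- `A` is semipositive: `Ax > 0` entrywise for some entrywise nonnegative `x`. -/
def Semipositive {m n : ℕ} (A : Matrix (Fin m) (Fin n) ℝ) : Prop :=
  ∃ x : Fin n → ℝ, (∀ j, 0 ≤ x j) ∧ ∀ i, 0 < A.mulVec x i

namespace Matrix

variable {R m n : Type*} [Fintype n] [Semiring R] [PartialOrder R]

lemma mulVec_apply_nonneg [IsOrderedRing R] {A : Matrix m n R} {x : n → R}
    (hA : ∀ i j, 0 ≤ A i j) (hx : ∀ j, 0 ≤ x j) (i : m) : 0 ≤ (A *ᵥ x) i :=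
  dotProduct_nonneg_of_nonneg (hA i) hx

lemma mulVec_apply_pos_of_exists_pos [IsStrictOrderedRing R] {A : Matrix m n R} {x : n → R}
    (hA : ∀ i j, 0 ≤ A i j) {i : m} (hrow : ∃ j, 0 < A i j) (hx : ∀ j, 0 < x j) :
    0 < (A *ᵥ x) i := by
  obtain ⟨j, hj⟩ := hrow
  exact Finset.sum_pos' (fun k _ => mul_nonneg (hA i k) (hx k).le)
    ⟨j, Finset.mem_univ j, mul_pos hj (hx j)⟩

end Matrix

namespace Semipositive

variable {k m n p : ℕ} {A : Matrix (Fin m) (Fin n) ℝ}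

lemma mul_left (hA : Semipositive A) {X : Matrix (Fin k) (Fin m) ℝ}
    (hXnonneg : ∀ i j, 0 ≤ X i j) (hXrow : ∀ i, ∃ j, 0 < X i j) :
    Semipositive (X * A) := by
  obtain ⟨x, hx, hAx⟩ := hA
  refine ⟨x, hx, fun i => ?_⟩
  rw [← Matrix.mulVec_mulVec]
  exact Matrix.mulVec_apply_pos_of_exists_pos hXnonneg (hXrow i) hAx

/-- The witness `x` for `A` is transported to the witness `Z x` for `A Y`. -/
lemma mul_right_of_mul_eq_one (hA : Semipositive A) {Y : Matrix (Fin n) (Fin p) ℝ}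
    {Z : Matrix (Fin p) (Fin n) ℝ} (hYZ : Y * Z = 1) (hZ : ∀ i j, 0 ≤ Z i j) :
    Semipositive (A * Y) := by
  obtain ⟨x, hx, hAx⟩ := hA
  refine ⟨Z *ᵥ x, Matrix.mulVec_apply_nonneg hZ hx, fun i => ?_⟩
  rw [← Matrix.mulVec_mulVec, Matrix.mulVec_mulVec _ Y, hYZ, Matrix.one_mulVec]
  exact hAx i

end Semipositive

theorem semipositive_of_rowPositive_mul_invNonneg (m n : ℕ)
    (A : Matrix (Fin m) (Fin n) ℝ) (X : Matrix (Fin m) (Fin m) ℝ)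
    (Y : Matrix (Fin n) (Fin n) ℝ)
    (hA : Semipositive A)
    (hXnonneg : ∀ i j, 0 ≤ X i j) (hXrow : ∀ i, ∃ j, 0 < X i j)
    (hYunit : IsUnit Y) (hYinv : ∀ i j, 0 ≤ Y⁻¹ i j) :
    Semipositive (X * A * Y) :=
  (hA.mul_left hXnonneg hXrow).mul_right_of_mul_eq_one
    (Y.mul_nonsing_inv ((Y.isUnit_iff_isUnit_det).mp hYunit)) hYinv
end

section
/- An invertible matrix Q ∈ ℝ^{n×n} maps the nonnegative orthant onto itself (i.e., Q·ℝ^n_{≥0} = ℝ^n_{≥0}) if and only if Q is a nonnegative monomial matrix. -/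
/-!
If `Q` maps the nonnegative orthant onto itself then both `Q` and `Q⁻¹` are entrywise nonnegative.
For nonnegative `A`, `B` with `B * A = 1`, every off-diagonal entry `∑ₖ B i k * A k j` of the
product is a sum of nonnegative terms that vanishes, so `B i k ≠ 0` and `A k j ≠ 0` force `i = j`.
Since every row and column of an invertible matrix has a nonzero entry, this leaves exactly one
nonzero entry in each row and each column of `A`, which is positive.
-/

open scoped Matrix

/-- The permutation matrix of `σ`. -/
def permMat {n : ℕ} (σ : Equiv.Perm (Fin n)) : Matrix (Fin n) (Fin n) ℝ :=
  Matrix.of fun i j => if σ j = i then 1 else 0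

namespace Matrix

variable {ι R : Type*} [Fintype ι] [DecidableEq ι]

theorem exists_ne_zero_of_mul_eq_one [Semiring R] [Nontrivial R] {A B : Matrix ι ι R}
    (h : B * A = 1) (j : ι) : ∃ k, B j k ≠ 0 ∧ A k j ≠ 0 := by
  have hsum : ∑ k, B j k * A k j ≠ 0 := by
    rw [← mul_apply, h, one_apply_eq]
    exact one_ne_zero
  obtain ⟨k, -, hk⟩ := Finset.exists_ne_zero_of_sum_ne_zero hsum
  exact ⟨k, left_ne_zero_of_mul hk, right_ne_zero_of_mul hk⟩

section Nonneg

variable [Semiring R] [PartialOrder R] [IsOrderedRing R] {A B : Matrix ι ι R}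

theorem eq_of_ne_zero_of_mul_eq_one_of_nonneg [NoZeroDivisors R]
    (hA : ∀ i j, 0 ≤ A i j) (hB : ∀ i j, 0 ≤ B i j) (h : B * A = 1) {i k j : ι}
    (hBik : B i k ≠ 0) (hAkj : A k j ≠ 0) : i = j := by
  by_contra hij
  have hsum : ∑ m, B i m * A m j = 0 := by rw [← mul_apply, h, one_apply_ne hij]
  have hterm := (Finset.sum_eq_zero_iff_of_nonneg fun m _ => mul_nonneg (hB i m) (hA m j)).1
    hsum k (Finset.mem_univ k)
  exact mul_ne_zero hBik hAkj hterm

theorem exists_perm_ne_zero_iff_of_mul_eq_one_of_nonneg [Nontrivial R] [NoZeroDivisors R]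
    (hA : ∀ i j, 0 ≤ A i j) (hB : ∀ i j, 0 ≤ B i j) (hBA : B * A = 1) (hAB : A * B = 1) :
    ∃ σ : Equiv.Perm ι, ∀ i j, A i j ≠ 0 ↔ σ j = i := by
  have col_unique : ∀ {k k' j}, A k j ≠ 0 → A k' j ≠ 0 → k = k' := by
    intro k k' j hk hk'
    obtain ⟨i, hBji, -⟩ := exists_ne_zero_of_mul_eq_one hBA j
    exact (eq_of_ne_zero_of_mul_eq_one_of_nonneg hB hA hAB hk hBji).trans
      (eq_of_ne_zero_of_mul_eq_one_of_nonneg hB hA hAB hk' hBji).symm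
  have row_unique : ∀ {k j j'}, A k j ≠ 0 → A k j' ≠ 0 → j = j' := by
    intro k j j' hj hj'
    obtain ⟨i, -, hBik⟩ := exists_ne_zero_of_mul_eq_one hAB k
    exact (eq_of_ne_zero_of_mul_eq_one_of_nonneg hA hB hBA hBik hj).symm.trans
      (eq_of_ne_zero_of_mul_eq_one_of_nonneg hA hB hBA hBik hj')
  choose τ hτ using fun j => (exists_ne_zero_of_mul_eq_one hBA j).imp fun _ => And.right
  have hτinj : Function.Injective τ := fun j j' hjj' =>
    row_unique (hτ j) (hjj' ▸ hτ j')
  refine ⟨Equiv.ofBijective τ (Finite.injective_iff_bijective.mp hτinj), fun i j => ?_⟩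
  refine ⟨fun hij => col_unique (hτ j) hij, ?_⟩
  rintro rfl
  exact hτ j

theorem nonneg_of_mapsTo_orthant
    (h : Set.MapsTo A.mulVec {x | ∀ i, 0 ≤ x i} {x | ∀ i, 0 ≤ x i}) (i j : ι) :
    0 ≤ A i j := by
  simpa [mulVec_single_one] using h (x := Pi.single j 1) (Pi.single_nonneg.2 zero_le_one) i

end Nonneg

end Matrix

theorem permMat_mul_diagonal_apply {n : ℕ} (σ : Equiv.Perm (Fin n)) (d : Fin n → ℝ)
    (i j : Fin n) : (permMat σ * Matrix.diagonal d) i j = if σ j = i then d j else 0 := by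
  simp [permMat, Matrix.mul_diagonal]

theorem permMat_mul_diagonal_mulVec {n : ℕ} (σ : Equiv.Perm (Fin n)) (d x : Fin n → ℝ) :
    (permMat σ * Matrix.diagonal d) *ᵥ x = fun i => d (σ.symm i) * x (σ.symm i) := by
  ext i
  simp only [Matrix.mulVec, dotProduct, permMat_mul_diagonal_apply, ite_mul, zero_mul,
    ← Equiv.eq_symm_apply, Finset.sum_ite_eq', Finset.mem_univ, if_true]

theorem image_orthant_permMat_mul_diagonal {n : ℕ} (σ : Equiv.Perm (Fin n)) {d : Fin n → ℝ}
    (hd : ∀ i, 0 < d i) :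
    (permMat σ * Matrix.diagonal d).mulVec '' {x | ∀ i, 0 ≤ x i} = {x | ∀ i, 0 ≤ x i} := by
  ext y
  simp only [Set.mem_image, Set.mem_ofPred_eq, permMat_mul_diagonal_mulVec]
  constructor
  · rintro ⟨x, hx, rfl⟩ i
    exact mul_nonneg (hd _).le (hx _)
  · intro hy
    refine ⟨fun j => y (σ j) / d j, fun j => div_nonneg (hy _) (hd j).le, ?_⟩
    ext i
    simp only [Equiv.apply_symm_apply]
    exact mul_div_cancel₀ _ (hd _).ne'

theorem maps_orthant_onto_iff_monomial (n : ℕ) (Q : Matrix (Fin n) (Fin n) ℝ)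
    (hQ : IsUnit Q) :
    Q.mulVec '' {x | ∀ i, 0 ≤ x i} = {x | ∀ i, 0 ≤ x i} ↔
      ∃ (σ : Equiv.Perm (Fin n)) (d : Fin n → ℝ),
        (∀ i, 0 < d i) ∧ Q = permMat σ * Matrix.diagonal d := by
  constructor
  · intro h
    obtain ⟨B, hBQ, hQB⟩ : ∃ B, B * Q = 1 ∧ Q * B = 1 := by
      have hdet := (Matrix.isUnit_iff_isUnit_det Q).mp hQ
      exact ⟨Q⁻¹, Q.nonsing_inv_mul hdet, Q.mul_nonsing_inv hdet⟩
    have hQnonneg := Q.nonneg_of_mapsTo_orthant fun x hx => h ▸ Set.mem_image_of_mem _ hx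
    have hBnonneg : ∀ i j, 0 ≤ B i j := by
      refine B.nonneg_of_mapsTo_orthant fun y hy => ?_
      obtain ⟨x, hx, rfl⟩ := h.symm ▸ hy
      rwa [Matrix.mulVec_mulVec, hBQ, Matrix.one_mulVec]
    obtain ⟨σ, hσ⟩ :=
      Q.exists_perm_ne_zero_iff_of_mul_eq_one_of_nonneg hQnonneg hBnonneg hBQ hQB
    refine ⟨σ, fun j => Q (σ j) j, fun j => (hQnonneg _ _).lt_of_ne' ((hσ _ _).2 rfl), ?_⟩
    ext i j
    rw [permMat_mul_diagonal_apply]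
    split_ifs with hij
    · rw [hij]
    · exact not_not.1 (mt (hσ i j).1 hij)
  · rintro ⟨σ, d, hd, rfl⟩
    exact image_orthant_permMat_mul_diagonal σ hd
end
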